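/- arXiv:1810.04286 — 2 statements merged into one kernel-verified Lean document; each statement's English description precedes it below -/
import Mathlib

section
/- The mean measure of the random probability measure α_{U,Δ} is Lebesgue measure on [0,1]: for every bounded measurable function ψ : [0,1] → ℝ, E[∫ ψ dα_{U,Δ}] = ∫₀¹ ψ(y) dy. -/
/-!
Condition on `C = c`. The inner integral is `ψ (F₀ X)` on `{X ≤ c}` and the average of `ψ` over
`(F₀ c, 1)` on `{X > c}`. Since `F₀ X` is uniform on `[0, 1]` and `{X ≤ c} = {F₀ X ≤ F₀ c}`
almost surely, the first part contributes `∫ ψ` over `[0, F₀ c]`; the second event has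
probability `1 - F₀ c`, the length of `(F₀ c, 1)`, so it contributes `∫ ψ` over `(F₀ c, 1)`.
The sum is `∫ ψ` over `[0, 1]` for every `c`, and independence of `X` and `C` lets us integrate
over `c` last.
-/

open MeasureTheory ProbabilityTheory

/-- The random probability measure `α_{u,δ}` on `[0,1]`: a Dirac point mass at `u`
when `δ = 1` (uncensored), and the uniform distribution on `(u,1)` when `δ = 0`. -/
noncomputable def alphaMeas (u : ℝ) (δ : Bool) : Measure ℝ :=
  if δ then Measure.dirac u
  else ENNReal.ofReal (1 / (1 - u)) • volume.restrict (Set.Ioo u 1)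

open Set

lemma Set.Iic_inter_Icc {α : Type*} [LinearOrder α] (a b c : α) :
    Iic a ∩ Icc b c = Icc b (min a c) := by
  ext x
  simp only [mem_inter_iff, mem_Iic, mem_Icc, le_min_iff]
  tauto

lemma Continuous.exists_setOf_le_eq_Iic {F : ℝ → ℝ} (hF : Continuous F) (hF_mono : Monotone F)
    {a : ℝ} (hne : {x | F x ≤ a}.Nonempty) (hbdd : BddAbove {x | F x ≤ a}) :
    ∃ d, {x | F x ≤ a} = Iic d ∧ F d = a := by
  have hd : sSup {x | F x ≤ a} ∈ {x | F x ≤ a} :=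
    (isClosed_le hF continuous_const).csSup_mem hne hbdd
  refine ⟨_, Subset.antisymm (fun x hx => le_csSup hbdd hx) (fun x hx => (hF_mono hx).trans hd),
    hd.antisymm ?_⟩
  refine ge_of_tendsto (hF.continuousWithinAt (s := Ioi (sSup {x | F x ≤ a}))) ?_
  filter_upwards [self_mem_nhdsWithin] with x hx
  exact le_of_lt (not_le.mp fun hxa => (le_csSup hbdd hxa).not_gt hx)

section

variable {E : Type*} [NormedAddCommGroup E] [NormedSpace ℝ E]

lemma setAverage_eq_integral_cond {α : Type*} [MeasurableSpace α] (μ : Measure α) (s : Set α)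
    (f : α → E) : ⨍ x in s, f x ∂μ = ∫ x, f x ∂μ[|s] := by
  rw [setAverage_eq']
  rfl

lemma norm_setAverage_le_of_forall_norm_le {α : Type*} [MeasurableSpace α] {μ : Measure α}
    {s : Set α} {f : α → E} {B : ℝ} (hB₀ : 0 ≤ B) (hB : ∀ x, ‖f x‖ ≤ B) :
    ‖⨍ x in s, f x ∂μ‖ ≤ B :=
  setAverage_eq_integral_cond μ s f ▸
    (norm_integral_le_of_norm_le_const (μ := μ[|s]) (ae_of_all _ hB)).trans
      (mul_le_of_le_one_right hB₀ measureReal_le_one)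

lemma stronglyMeasurable_setAverage_Ioo {f : ℝ → E} (hf : StronglyMeasurable f) (b : ℝ) :
    StronglyMeasurable fun u => ⨍ t in Ioo u b, f t := by
  have h_integral : StronglyMeasurable fun u => ∫ t in Ioo u b, f t := by
    simp_rw [← integral_indicator measurableSet_Ioo]
    refine StronglyMeasurable.integral_prod_right (f := fun u t => (Ioo u b).indicator f t) ?_
    exact (hf.comp_measurable measurable_snd).indicator
      ((measurableSet_lt measurable_fst measurable_snd).inter
        (measurableSet_lt measurable_snd measurable_const))
  simp_rw [setAverage_eq, Real.volume_real_Ioo]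
  exact (by fun_prop : Measurable fun u : ℝ => (max (b - u) 0)⁻¹).stronglyMeasurable.smul
    h_integral

lemma ProbabilityTheory.IndepFun.integral_comp_eq_integral_integral {Ω α β : Type*}
    [MeasurableSpace Ω] [MeasurableSpace α] [MeasurableSpace β] {P : Measure Ω} [IsFiniteMeasure P]
    {X : Ω → α} {Y : Ω → β} (hXY : IndepFun X Y P) (hX : AEMeasurable X P)
    (hY : AEMeasurable Y P) {g : α × β → E} (hg : Integrable g ((P.map X).prod (P.map Y))) :
    ∫ ω, g (X ω, Y ω) ∂P = ∫ y, ∫ x, g (x, y) ∂P.map X ∂P.map Y := by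
  have hmap := (indepFun_iff_map_prod_eq_prod_map_map hX hY).mp hXY
  rw [← integral_prod_symm g hg, ← hmap,
    integral_map (hX.prodMk hY) (hmap ▸ hg.aestronglyMeasurable)]

end

namespace ProbabilityTheory

variable {μ : Measure ℝ} [IsProbabilityMeasure μ]

lemma measure_setOf_cdf_le (hμ : Continuous (cdf μ)) {a : ℝ} (ha₀ : 0 ≤ a) (ha₁ : a ≤ 1) :
    μ {x | cdf μ x ≤ a} = ENNReal.ofReal a := by
  obtain ha₁ | rfl := ha₁.lt_or_eq
  swap
  · simp [cdf_le_one]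
  obtain hempty | hne := {x | cdf μ x ≤ a}.eq_empty_or_nonempty
  · obtain rfl | ha₀ := ha₀.eq_or_lt
    · simp [hempty]
    obtain ⟨x, hx⟩ := ((tendsto_cdf_atBot μ).eventually_lt_const ha₀).exists
    exact absurd (hempty.subset hx.le) (notMem_empty x)
  have hbdd : BddAbove {x | cdf μ x ≤ a} := by
    obtain ⟨b, hb⟩ := ((tendsto_cdf_atTop μ).eventually_const_lt ha₁).exists
    exact ⟨b, fun x hx => le_of_not_gt fun hbx => (hb.trans_le (monotone_cdf μ hbx.le)).not_ge hx⟩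
  obtain ⟨d, hd, hcdf_d⟩ := hμ.exists_setOf_le_eq_Iic (monotone_cdf μ) hne hbdd
  rw [hd, ← ofReal_cdf, hcdf_d]

lemma map_cdf_eq_volume_restrict_Icc (hμ : Continuous (cdf μ)) :
    μ.map (cdf μ) = volume.restrict (Icc 0 1) := by
  refine Measure.ext_of_Iic _ _ fun a => ?_
  rw [Measure.map_apply hμ.measurable measurableSet_Iic,
    Measure.restrict_apply measurableSet_Iic, Iic_inter_Icc, Real.volume_Icc, sub_zero]
  obtain ha | ha := lt_or_ge a 0
  · have : cdf μ ⁻¹' Iic a = ∅ := eq_empty_of_forall_notMem fun x hx =>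
      (ha.trans_le (cdf_nonneg μ x)).not_ge hx
    rw [this, measure_empty, ENNReal.ofReal_eq_zero.mpr ((min_le_left a 1).trans ha.le)]
  obtain ha₁ | ha₁ := le_or_gt a 1
  · rw [min_eq_left ha₁]
    exact measure_setOf_cdf_le hμ ha ha₁
  · have : cdf μ ⁻¹' Iic a = univ := eq_univ_of_forall fun x => (cdf_le_one μ x).trans ha₁.le
    rw [this, measure_univ, min_eq_right ha₁.le, ENNReal.ofReal_one]

lemma Iic_ae_eq_setOf_cdf_le (hμ : Continuous (cdf μ)) (c : ℝ) :
    (Iic c : Set ℝ) =ᵐ[μ] {x | cdf μ x ≤ cdf μ c} :=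
  ae_eq_of_subset_of_measure_ge (fun _ hx => monotone_cdf μ hx)
    (by rw [measure_setOf_cdf_le hμ (cdf_nonneg μ c) (cdf_le_one μ c), ofReal_cdf])
    measurableSet_Iic.nullMeasurableSet (measure_ne_top _ _)

variable {E : Type*} [NormedAddCommGroup E] [NormedSpace ℝ E]

lemma setIntegral_Iic_comp_cdf (hμ : Continuous (cdf μ)) {ψ : ℝ → E}
    (hψ : AEStronglyMeasurable ψ (volume.restrict (Icc 0 1))) (c : ℝ) :
    ∫ x in Iic c, ψ (cdf μ x) ∂μ = ∫ y in Icc 0 (cdf μ c), ψ y := by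
  rw [← map_cdf_eq_volume_restrict_Icc hμ] at hψ
  rw [setIntegral_congr_set (Iic_ae_eq_setOf_cdf_le hμ c)]
  change ∫ x in cdf μ ⁻¹' Iic (cdf μ c), ψ (cdf μ x) ∂μ = _
  rw [← setIntegral_map measurableSet_Iic hψ hμ.measurable.aemeasurable,
    map_cdf_eq_volume_restrict_Icc hμ, Measure.restrict_restrict measurableSet_Iic, Iic_inter_Icc,
    min_eq_left (cdf_le_one μ c)]

lemma integral_ite_le_cdf [CompleteSpace E] (hμ : Continuous (cdf μ)) {ψ : ℝ → E}
    (hψ : IntegrableOn ψ (Icc 0 1)) (c : ℝ) :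
    ∫ x, (if x ≤ c then ψ (cdf μ x) else ⨍ t in Ioo (cdf μ c) 1, ψ t) ∂μ
      = ∫ y in Icc 0 1, ψ y := by
  have ha₀ := cdf_nonneg μ c
  have ha₁ := cdf_le_one μ c
  have hψ_cdf : Integrable (fun x => ψ (cdf μ x)) μ := by
    have hψ_map : Integrable ψ (μ.map (cdf μ)) := by rwa [map_cdf_eq_volume_restrict_Icc hμ]
    exact (integrable_map_measure hψ_map.aestronglyMeasurable hμ.measurable.aemeasurable).mp
      hψ_map
  have hcompl : μ.real (Iic c)ᶜ = volume.real (Ioo (cdf μ c) 1) := by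
    rw [probReal_compl_eq_one_sub measurableSet_Iic, ← cdf_eq_real,
      Real.volume_real_Ioo_of_le ha₁]
  calc ∫ x, (if x ≤ c then ψ (cdf μ x) else ⨍ t in Ioo (cdf μ c) 1, ψ t) ∂μ
      = ∫ x in Iic c, ψ (cdf μ x) ∂μ + ∫ x in (Iic c)ᶜ, (⨍ t in Ioo (cdf μ c) 1, ψ t) ∂μ :=
        integral_piecewise (s := Iic c) measurableSet_Iic hψ_cdf.integrableOn
          (integrable_const _).integrableOn
    _ = (∫ y in Icc 0 (cdf μ c), ψ y) + ∫ y in Ioo (cdf μ c) 1, ψ y := by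
        rw [setIntegral_Iic_comp_cdf hμ hψ.aestronglyMeasurable, setIntegral_const, hcompl,
          measure_smul_setAverage _ measure_Ioo_lt_top.ne]
    _ = ∫ y in Icc 0 1, ψ y := by
        rw [← integral_Ioc_eq_integral_Ioo, ← setIntegral_union
          ((Iic_disjoint_Ioc le_rfl).mono_left Icc_subset_Iic_self) measurableSet_Ioc
          (hψ.mono_set (Icc_subset_Icc le_rfl ha₁))
          (hψ.mono_set (Ioc_subset_Icc_self.trans (Icc_subset_Icc ha₀ le_rfl))),
          Icc_union_Ioc_eq_Icc ha₀ ha₁]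

end ProbabilityTheory

section

variable {E : Type*} [NormedAddCommGroup E] [NormedSpace ℝ E]

lemma alphaMeas_false (u : ℝ) : alphaMeas u false = volume[|Ioo u 1] := by
  unfold ProbabilityTheory.cond
  obtain hu | hu := lt_or_ge u 1
  · rw [alphaMeas, Real.volume_Ioo, one_div, ← ENNReal.ofReal_inv_of_pos (by linarith)]
    rfl
  · simp [alphaMeas, Ioo_eq_empty hu.not_gt]

lemma integral_alphaMeas_min [CompleteSpace E] (ψ : ℝ → E) (F : ℝ → ℝ) (x c : ℝ) :
    ∫ t, ψ t ∂alphaMeas (F (min x c)) (decide (x ≤ c))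
      = if x ≤ c then ψ (F x) else ⨍ t in Ioo (F c) 1, ψ t := by
  by_cases h : x ≤ c
  · simp [alphaMeas, h, integral_dirac]
  · rw [if_neg h, decide_eq_false h, min_eq_right (le_of_not_ge h), alphaMeas_false,
      setAverage_eq_integral_cond]

lemma integrable_ite_le_setAverage {ρ : Measure (ℝ × ℝ)} [IsFiniteMeasure ρ] {ψ : ℝ → E}
    (hψ : StronglyMeasurable ψ) {B : ℝ} (hB : ∀ y, ‖ψ y‖ ≤ B) {F : ℝ → ℝ} (hF : Measurable F) :
    Integrable (fun p : ℝ × ℝ =>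
      if p.1 ≤ p.2 then ψ (F p.1) else ⨍ t in Ioo (F p.2) 1, ψ t) ρ := by
  refine Integrable.of_bound ?_ B (ae_of_all _ fun p => ?_)
  · exact (StronglyMeasurable.ite (measurableSet_le measurable_fst measurable_snd)
      (hψ.comp_measurable (hF.comp measurable_fst))
      ((stronglyMeasurable_setAverage_Ioo hψ 1).comp_measurable
        (hF.comp measurable_snd))).aestronglyMeasurable
  · split_ifs
    · exact hB _
    · exact norm_setAverage_le_of_forall_norm_le ((norm_nonneg _).trans (hB 0)) hB

end

/-- Under the null hypothesis of independent right censoring,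
the mean measure of the random probability measure `α_{U,Δ}` is Lebesgue measure
on `[0,1]`: for every bounded measurable `ψ : [0,1] → ℝ`,
`E[∫ ψ dα_{U,Δ}] = ∫₀¹ ψ(y) dy`. -/
theorem mean_measure_alpha_eq_lebesgue
    {Ω : Type*} [MeasurableSpace Ω] (P : Measure Ω) [IsProbabilityMeasure P]
    (X C : Ω → ℝ) (hX : Measurable X) (hC : Measurable C)
    (hXC : IndepFun X C P)
    (F₀ : ℝ → ℝ) (hF₀c : Continuous F₀)
    (hF₀ : ∀ t : ℝ, F₀ t = (P {ω | X ω ≤ t}).toReal)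
    (ψ : ℝ → ℝ) (hψ : Measurable ψ) (hψb : ∃ B : ℝ, ∀ x, |ψ x| ≤ B) :
    ∫ ω, (∫ x, ψ x ∂(alphaMeas (F₀ (min (X ω) (C ω))) (decide (X ω ≤ C ω)))) ∂P
      = ∫ y in Set.Icc (0 : ℝ) 1, ψ y := by
  obtain ⟨B, hB⟩ := hψb
  have hX_law := Measure.isProbabilityMeasure_map (μ := P) hX.aemeasurable
  have hC_law := Measure.isProbabilityMeasure_map (μ := P) hC.aemeasurable
  have hF₀_eq : F₀ = cdf (P.map X) := funext fun t => by
    rw [hF₀, cdf_eq_real, measureReal_def, Measure.map_apply hX measurableSet_Iic]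
    rfl
  subst hF₀_eq
  have hψ_int : IntegrableOn ψ (Icc 0 1) :=
    Integrable.of_bound hψ.aestronglyMeasurable B (ae_of_all _ hB)
  rw [integral_congr_ae (ae_of_all P fun ω => integral_alphaMeas_min ψ _ (X ω) (C ω)),
    hXC.integral_comp_eq_integral_integral hX.aemeasurable hC.aemeasurable
      (integrable_ite_le_setAverage hψ.stronglyMeasurable hB hF₀c.measurable)]
  simp_rw [integral_ite_le_cdf hF₀c hψ_int, integral_const, probReal_univ, one_smul]
end

section
/- If (U₁,Δ₁) and (U₂,Δ₂) are independent, each distributed as (U,Δ) under the null hypothesis, then E[J((U₁,Δ₁),(U₂,Δ₂))] = 0. Consequently the U-statistic MMD_U = (n choose 2)⁻¹·Σ_{i<j} J((Uᵢ,Δᵢ),(Uⱼ,Δⱼ)) over an i.i.d. sample has expectation 0 = MMD²_K(λ, λ) under the null hypothesis, i.e. it is an unbiased estimator of the population squared MMD. -/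
/-!
Under the null hypothesis, mixing the measures `α_{U,Δ}` over the law of `(U, Δ)` gives
Lebesgue measure `λ` on `[0,1]`. Condition on `C = c`: on `{X ≤ c}` the law of `F₀(X)` is
Lebesgue measure on `(0, F₀(c)]` (as `F₀` is continuous), while `{X > c}` has probability
`1 - F₀(c)` and there `α_{U,Δ}` is the uniform law on `(F₀(c), 1)`. Since `J` is bilinear in
`λ - α_{u,δ}` and `λ - α_{u',δ'}`, integrating out an independent second observation replaces
`α_{u',δ'}` by `λ`, which makes `J` vanish; Fubini gives `E J = 0`.
-/

open MeasureTheory ProbabilityTheory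

/-- `∫∫ K(x,y) d(μ−ν)(x) d(μ'−ν')(y)`, expanded by bilinearity. -/
noncomputable def pairIntDiff (K : ℝ → ℝ → ℝ) (μ ν μ' ν' : Measure ℝ) : ℝ :=
  (∫ x, ∫ y, K x y ∂μ' ∂μ) - (∫ x, ∫ y, K x y ∂ν' ∂μ)
    - (∫ x, ∫ y, K x y ∂μ' ∂ν) + (∫ x, ∫ y, K x y ∂ν' ∂ν)

/-- The U-statistic kernel
`J((u,δ),(u',δ')) = ∫∫ K(x,y) d(λ − α_{u,δ})(x) d(λ − α_{u',δ'})(y)`. -/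
noncomputable def Jker (K : ℝ → ℝ → ℝ) (p q : ℝ × Bool) : ℝ :=
  pairIntDiff K (volume.restrict (Set.Icc (0:ℝ) 1)) (alphaMeas p.1 p.2)
    (volume.restrict (Set.Icc (0:ℝ) 1)) (alphaMeas q.1 q.2)

open Set Filter Topology

lemma alphaMeas_univ_le_one (u : ℝ) (δ : Bool) : alphaMeas u δ univ ≤ 1 := by
  cases δ with
  | true => simp [alphaMeas]
  | false =>
    rcases lt_or_ge u 1 with hu | hu
    · rw [alphaMeas, if_neg Bool.false_ne_true, Measure.smul_apply, Measure.restrict_apply_univ,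
        Real.volume_Ioo, smul_eq_mul, ← ENNReal.ofReal_mul (by simp [hu.le]),
        div_mul_cancel₀ 1 (sub_ne_zero.2 hu.ne'), ENNReal.ofReal_one]
    · simp [alphaMeas, Ioo_eq_empty_of_le hu]

lemma measurable_alphaMeas : Measurable fun q : ℝ × Bool => alphaMeas q.1 q.2 := by
  refine Measure.measurable_of_measurable_coe _ fun s hs =>
    measurable_from_prod_countable_left fun δ => ?_
  cases δ with
  | true =>
    simp only [alphaMeas, if_true, Measure.dirac_apply' _ hs]
    exact measurable_one.indicator hs
  | false =>
    simp only [alphaMeas, Bool.false_eq_true, if_false, Measure.smul_apply,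
      Measure.restrict_apply hs, smul_eq_mul]
    refine (ENNReal.measurable_ofReal.comp (by fun_prop)).mul (Antitone.measurable ?_)
    exact fun u v huv => measure_mono (inter_subset_inter_right _ (Ioo_subset_Ioo_left huv))

noncomputable def alphaKernel : Kernel (ℝ × Bool) ℝ :=
  ⟨fun q => alphaMeas q.1 q.2, measurable_alphaMeas⟩

lemma alphaKernel_apply (q : ℝ × Bool) : alphaKernel q = alphaMeas q.1 q.2 := rfl

instance : IsFiniteKernel alphaKernel :=
  ⟨⟨1, ENNReal.one_lt_top, fun q => alphaMeas_univ_le_one q.1 q.2⟩⟩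

lemma ae_alphaMeas_mem_Icc {u : ℝ} (hu : u ∈ Icc (0 : ℝ) 1) (δ : Bool) :
    ∀ᵐ x ∂alphaMeas u δ, x ∈ Icc (0 : ℝ) 1 := by
  cases δ with
  | true => exact (ae_dirac_iff measurableSet_Icc).2 hu
  | false =>
    exact Measure.ae_smul_measure (ae_restrict_of_forall_mem measurableSet_Ioo
      fun x hx => ⟨hu.1.trans hx.1.le, hx.2.le⟩) _

lemma ofReal_one_sub_smul_alphaMeas_false {a : ℝ} (ha : a ≤ 1) :
    ENNReal.ofReal (1 - a) • alphaMeas a false = volume.restrict (Ioo a 1) := by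
  rcases ha.lt_or_eq with ha | rfl
  · rw [alphaMeas, if_neg Bool.false_ne_true, smul_smul, ← ENNReal.ofReal_mul (by linarith),
      mul_one_div_cancel (sub_ne_zero.2 ha.ne'), ENNReal.ofReal_one, one_smul]
  · simp

lemma volume_restrict_Ioc_add_Ioo {a : ℝ} (ha₀ : 0 ≤ a) (ha₁ : a ≤ 1) :
    volume.restrict (Ioc 0 a) + volume.restrict (Ioo a 1) = volume.restrict (Icc (0 : ℝ) 1) := by
  rw [Measure.restrict_congr_set Ioo_ae_eq_Ioc, ← Measure.restrict_union
    (Ioc_disjoint_Ioc_of_le le_rfl) measurableSet_Ioc, Ioc_union_Ioc_eq_Ioc ha₀ ha₁,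
    Measure.restrict_congr_set Ioc_ae_eq_Icc]

section ProbabilityIntegralTransform

variable (μ : Measure ℝ) [IsProbabilityMeasure μ]

lemma measure_cdf_le {u : ℝ} (hμ : Continuous (cdf μ)) (hu : u < 1) :
    μ {x | cdf μ x ≤ u} = ENNReal.ofReal u := by
  rcases eq_empty_or_nonempty {x | cdf μ x ≤ u} with hempty | hne
  · have hu₀ : u ≤ 0 := ge_of_tendsto (tendsto_cdf_atBot μ) (Eventually.of_forall fun x =>
      le_of_lt (not_le.1 fun hx => hempty.subset hx))
    rw [hempty, measure_empty, ENNReal.ofReal_of_nonpos hu₀]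
  obtain ⟨b, hb⟩ := ((tendsto_cdf_atTop μ).eventually_const_lt hu).exists
  have hbdd : BddAbove {x | cdf μ x ≤ u} := ⟨b, fun x hx =>
    le_of_not_gt fun hbx => (hb.trans_le (monotone_cdf μ hbx.le)).not_ge hx⟩
  set s := sSup {x | cdf μ x ≤ u}
  have hs_le : cdf μ s ≤ u := (isClosed_le hμ continuous_const).csSup_mem hne hbdd
  have hset : {x | cdf μ x ≤ u} = Iic s :=
    Set.ext fun x => ⟨fun hx => le_csSup hbdd hx, fun hx => (monotone_cdf μ hx).trans hs_le⟩
  -- right of `s` the cdf exceeds `u`, so by continuity `cdf μ s = u`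
  have hs_ge : u ≤ cdf μ s := ge_of_tendsto ((hμ.tendsto s).mono_left nhdsWithin_le_nhds)
    (eventually_nhdsWithin_of_forall (s := Ioi s) fun y hy =>
      le_of_lt (not_le.1 fun h => not_le.2 (mem_Ioi.1 hy) (hset ▸ h : y ∈ Iic s)))
  rw [hset, ← ofReal_cdf, le_antisymm hs_le hs_ge]

lemma map_cdf_restrict_Iic (hμ : Continuous (cdf μ)) (c : ℝ) :
    (μ.restrict (Iic c)).map (cdf μ) = volume.restrict (Ioc 0 (cdf μ c)) := by
  have hm : Measurable (cdf μ) := (monotone_cdf μ).measurable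
  refine Measure.ext_of_Iic _ _ fun u => ?_
  rw [Measure.map_apply hm measurableSet_Iic, Measure.restrict_apply (hm measurableSet_Iic),
    Measure.restrict_apply measurableSet_Iic, inter_comm (Iic u), Ioc_inter_Iic,
    Real.volume_Ioc, sub_zero]
  change μ ({x | cdf μ x ≤ u} ∩ Iic c) = _
  rcases le_or_gt (cdf μ c) u with h | h
  · have hsub : Iic c ⊆ {x | cdf μ x ≤ u} := fun x hx => (monotone_cdf μ hx).trans h
    rw [inter_eq_right.2 hsub, min_eq_left h, ofReal_cdf]
  · have hsub : {x | cdf μ x ≤ u} ⊆ Iic c := fun x hx => le_of_not_gt fun hcx =>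
      (lt_of_le_of_lt hx h).not_ge (monotone_cdf μ hcx.le)
    rw [inter_eq_left.2 hsub, min_eq_right h.le]
    exact measure_cdf_le μ hμ (h.trans_le (cdf_le_one μ c))

end ProbabilityIntegralTransform

-- `(U, Δ) = censoredObs F₀ (X, C)`
noncomputable def censoredObs (F : ℝ → ℝ) (z : ℝ × ℝ) : ℝ × Bool :=
  (F (min z.1 z.2), decide (z.1 ≤ z.2))

lemma measurable_censoredObs {F : ℝ → ℝ} (hF : Measurable F) : Measurable (censoredObs F) :=
  (hF.comp (measurable_fst.min measurable_snd)).prodMk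
    (measurable_to_bool (by
      simpa [preimage] using (measurableSet_le measurable_fst measurable_snd :
        MeasurableSet {z : ℝ × ℝ | z.1 ≤ z.2})))

lemma lintegral_alphaKernel_censoredObs (μ : Measure ℝ) [IsProbabilityMeasure μ]
    (hμ : Continuous (cdf μ)) (c : ℝ) {s : Set ℝ} (hs : MeasurableSet s) :
    ∫⁻ x, alphaKernel (censoredObs (cdf μ) (x, c)) s ∂μ = volume.restrict (Icc 0 1) s := by
  have hm : Measurable (cdf μ) := (monotone_cdf μ).measurable
  have hobserved : ∫⁻ x in Iic c, alphaKernel (censoredObs (cdf μ) (x, c)) s ∂μ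
      = volume.restrict (Ioc 0 (cdf μ c)) s := by
    rw [setLIntegral_congr_fun measurableSet_Iic (g := fun x => Measure.dirac (cdf μ x) s)
        fun x (hx : x ≤ c) => by simp [alphaKernel_apply, censoredObs, alphaMeas, hx],
      ← Measure.bind_apply (f := fun x => Measure.dirac (cdf μ x)) hs
        (Measure.measurable_dirac.comp hm).aemeasurable,
      Measure.bind_dirac_eq_map _ hm, map_cdf_restrict_Iic μ hμ]
  have hcensored : ∫⁻ x in Ioi c, alphaKernel (censoredObs (cdf μ) (x, c)) s ∂μ
      = volume.restrict (Ioo (cdf μ c) 1) s := by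
    have hIoi : μ (Ioi c) = ENNReal.ofReal (1 - cdf μ c) := by
      rw [← compl_Iic, prob_compl_eq_one_sub measurableSet_Iic, ← ofReal_cdf,
        ENNReal.ofReal_sub _ (cdf_nonneg μ c), ENNReal.ofReal_one]
    rw [setLIntegral_congr_fun measurableSet_Ioi (g := fun _ => alphaMeas (cdf μ c) false s)
        fun x (hx : c < x) => by
          simp [alphaKernel_apply, censoredObs, hx.not_ge, min_eq_right hx.le],
      setLIntegral_const, mul_comm, hIoi, ← smul_eq_mul, ← Measure.smul_apply,
      ofReal_one_sub_smul_alphaMeas_false (cdf_le_one μ c)]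
  rw [← lintegral_add_compl _ measurableSet_Iic, compl_Iic, hobserved, hcensored,
    ← Measure.add_apply, volume_restrict_Ioc_add_Ioo (cdf_nonneg μ c) (cdf_le_one μ c)]

theorem alphaKernel_comp_map_censoredObs (μ ν : Measure ℝ) [IsProbabilityMeasure μ]
    [IsProbabilityMeasure ν] (hμ : Continuous (cdf μ)) :
    alphaKernel ∘ₘ (μ.prod ν).map (censoredObs (cdf μ)) = volume.restrict (Icc 0 1) := by
  ext s hs
  have hobs := measurable_censoredObs (monotone_cdf μ).measurable
  rw [Measure.bind_apply hs (Kernel.aemeasurable _),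
    lintegral_map (Kernel.measurable_coe _ hs) hobs,
    lintegral_prod_symm (fun z => alphaKernel (censoredObs (cdf μ) z) s)
      ((Kernel.measurable_coe _ hs).comp hobs).aemeasurable]
  simp_rw [lintegral_alphaKernel_censoredObs μ hμ _ hs]
  rw [lintegral_const, measure_univ, mul_one]

lemma MeasureTheory.Measure.integral_comp {β γ E : Type*} [MeasurableSpace β] [MeasurableSpace γ]
    [NormedAddCommGroup E] [NormedSpace ℝ E] {κ : Kernel β γ} {ρ : Measure β} {f : γ → E}
    (hf : Integrable f (κ ∘ₘ ρ)) : ∫ y, f y ∂(κ ∘ₘ ρ) = ∫ b, ∫ y, f y ∂κ b ∂ρ := by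
  rw [Measure.comp_eq_comp_const_apply] at hf ⊢
  rw [Kernel.integral_comp hf]
  rfl

section PairIntDiff

variable {β γ : Type*} [MeasurableSpace β] [MeasurableSpace γ] {K : ℝ → ℝ → ℝ} {M : ℝ}

lemma abs_integral_le_of_univ_le_one {ν : Measure ℝ} [IsFiniteMeasure ν] {f : ℝ → ℝ}
    (hf : ∀ y, |f y| ≤ M) (hν : ν univ ≤ 1) : |∫ y, f y ∂ν| ≤ M := by
  have hM : 0 ≤ M := (abs_nonneg _).trans (hf 0)
  refine (norm_integral_le_of_norm_le_const (f := f) (ae_of_all ν hf)).trans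
    (mul_le_of_le_one_right hM ?_)
  exact ENNReal.toReal_le_of_le_ofReal zero_le_one (by simpa using hν)

lemma abs_integral_integral_le {μ ν : Measure ℝ} [IsFiniteMeasure μ] [IsFiniteMeasure ν]
    (hKb : ∀ x y, |K x y| ≤ M) (hμ : μ univ ≤ 1) (hν : ν univ ≤ 1) :
    |∫ x, ∫ y, K x y ∂ν ∂μ| ≤ M :=
  abs_integral_le_of_univ_le_one (fun x => abs_integral_le_of_univ_le_one (hKb x) hν) hμ

lemma abs_pairIntDiff_le {μ ν μ' ν' : Measure ℝ} [IsFiniteMeasure μ] [IsFiniteMeasure ν]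
    [IsFiniteMeasure μ'] [IsFiniteMeasure ν'] (hKb : ∀ x y, |K x y| ≤ M)
    (hμ : μ univ ≤ 1) (hν : ν univ ≤ 1) (hμ' : μ' univ ≤ 1) (hν' : ν' univ ≤ 1) :
    |pairIntDiff K μ ν μ' ν'| ≤ 4 * M := by
  have h₁ := abs_le.1 (abs_integral_integral_le hKb hμ hμ')
  have h₂ := abs_le.1 (abs_integral_integral_le hKb hμ hν')
  have h₃ := abs_le.1 (abs_integral_integral_le hKb hν hμ')
  have h₄ := abs_le.1 (abs_integral_integral_le hKb hν hν')
  rw [pairIntDiff, abs_le]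
  constructor <;> linarith

lemma measurable_integral_kernel_right (η : Kernel γ ℝ) [IsSFiniteKernel η]
    (hK : Measurable (Function.uncurry K)) :
    Measurable fun w : γ × ℝ => ∫ y, K w.2 y ∂η w.1 :=
  ((hK.comp (measurable_fst.snd.prodMk measurable_snd)).stronglyMeasurable
    |>.integral_kernel_prod_right' (κ := η.prodMkRight ℝ)).measurable

lemma measurable_integral_integral (η η' : Kernel γ ℝ) [IsSFiniteKernel η] [IsSFiniteKernel η']
    (hK : Measurable (Function.uncurry K)) :
    Measurable fun c => ∫ x, ∫ y, K x y ∂η' c ∂η c :=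
  ((measurable_integral_kernel_right η' hK).stronglyMeasurable.integral_kernel_prod_right'
    (κ := η)).measurable

lemma measurable_pairIntDiff (κ : Kernel β ℝ) [IsSFiniteKernel κ] (μ : Measure ℝ) [SFinite μ]
    (hK : Measurable (Function.uncurry K)) :
    Measurable fun z : β × β => pairIntDiff K μ (κ z.1) μ (κ z.2) := by
  let κ₁ := κ.prodMkRight β
  let κ₂ := κ.prodMkLeft β
  let c := Kernel.const (β × β) μ
  exact (((measurable_integral_integral c c hK).sub (measurable_integral_integral c κ₂ hK)).sub
    (measurable_integral_integral κ₁ c hK)).add (measurable_integral_integral κ₁ κ₂ hK)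

lemma integrable_pairIntDiff (κ : Kernel β ℝ) [IsFiniteKernel κ] (hκ : ∀ b, κ b univ ≤ 1)
    (μ : Measure ℝ) [IsFiniteMeasure μ] (hμ : μ univ ≤ 1) (π : Measure (β × β))
    [IsFiniteMeasure π] (hK : Measurable (Function.uncurry K)) (hKb : ∀ x y, |K x y| ≤ M) :
    Integrable (fun z : β × β => pairIntDiff K μ (κ z.1) μ (κ z.2)) π :=
  .of_bound (measurable_pairIntDiff κ μ hK).aestronglyMeasurable (4 * M)
    (ae_of_all _ fun z => abs_pairIntDiff_le hKb hμ (hκ z.1) hμ (hκ z.2))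

lemma comp_univ_le_one (κ : Kernel β ℝ) (hκ : ∀ b, κ b univ ≤ 1) (ρ : Measure β)
    [IsProbabilityMeasure ρ] : (κ ∘ₘ ρ) univ ≤ 1 := by
  rw [Measure.bind_apply MeasurableSet.univ (Kernel.aemeasurable _)]
  exact (lintegral_mono hκ).trans_eq (by simp)

variable (κ : Kernel β ℝ) [IsFiniteKernel κ] (hκ : ∀ b, κ b univ ≤ 1)
  (hK : Measurable (Function.uncurry K)) (hKb : ∀ x y, |K x y| ≤ M)
include hκ hK hKb

lemma integral_integral_integral_kernel (ρ : Measure β) [IsFiniteMeasure ρ] (m : Measure ℝ)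
    [IsFiniteMeasure m] :
    ∫ b, ∫ x, ∫ y, K x y ∂κ b ∂m ∂ρ = ∫ x, ∫ y, K x y ∂(κ ∘ₘ ρ) ∂m := by
  have hint : Integrable (Function.uncurry fun b x => ∫ y, K x y ∂κ b) (ρ.prod m) :=
    .of_bound (measurable_integral_kernel_right κ hK).aestronglyMeasurable M
      (ae_of_all _ fun w => abs_integral_le_of_univ_le_one (hKb w.2) (hκ w.1))
  rw [integral_integral_swap hint]
  refine integral_congr_ae (ae_of_all _ fun x => (Measure.integral_comp ?_).symm)
  exact .of_bound (hK.comp measurable_prodMk_left).aestronglyMeasurable M (ae_of_all _ (hKb x))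

lemma integrable_integral_integral_kernel (ρ : Measure β) [IsFiniteMeasure ρ]
    {m : Measure ℝ} [IsFiniteMeasure m]
    (hm : m univ ≤ 1) : Integrable (fun b => ∫ x, ∫ y, K x y ∂κ b ∂m) ρ :=
  .of_bound (measurable_integral_integral (Kernel.const β m) κ hK).aestronglyMeasurable M
    (ae_of_all _ fun b => abs_integral_integral_le hKb hm (hκ b))

-- Averaged over `ρ`, the last measure `κ b` becomes `κ ∘ₘ ρ`, so the four terms cancel in pairs.
lemma integral_pairIntDiff_comp_right (ρ : Measure β) [IsProbabilityMeasure ρ]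
    {μ ν : Measure ℝ} [IsFiniteMeasure μ] [IsFiniteMeasure ν] (hμ : μ univ ≤ 1) (hν : ν univ ≤ 1) :
    ∫ b, pairIntDiff K μ ν (κ ∘ₘ ρ) (κ b) ∂ρ = 0 := by
  have hμint := integrable_integral_integral_kernel κ hκ hK hKb ρ hμ
  have hνint := integrable_integral_integral_kernel κ hκ hK hKb ρ hν
  simp only [pairIntDiff]
  rw [integral_add, integral_sub, integral_sub (integrable_const _) hμint,
    integral_integral_integral_kernel κ hκ hK hKb ρ μ,
    integral_integral_integral_kernel κ hκ hK hKb ρ ν]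
  · simp
  all_goals fun_prop

theorem integral_prod_pairIntDiff_comp (ρ : Measure β) [IsProbabilityMeasure ρ] :
    ∫ z, pairIntDiff K (κ ∘ₘ ρ) (κ z.1) (κ ∘ₘ ρ) (κ z.2) ∂(ρ.prod ρ) = 0 := by
  have hρκ := comp_univ_le_one κ hκ ρ
  rw [integral_prod _ (integrable_pairIntDiff κ hκ _ hρκ _ hK hKb)]
  simp only [integral_pairIntDiff_comp_right κ hκ hK hKb ρ hρκ (hκ _), integral_zero]

end PairIntDiff

lemma exists_bounded_measurable_eq_on {K : ℝ → ℝ → ℝ} {S : Set ℝ} (hS : MeasurableSet S)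
    (hK : Measurable (Function.uncurry K)) (hKb : ∃ M, ∀ x ∈ S, ∀ y ∈ S, |K x y| ≤ M) :
    ∃ (K' : ℝ → ℝ → ℝ) (M : ℝ), Measurable (Function.uncurry K') ∧ (∀ x y, |K' x y| ≤ M) ∧
      ∀ x ∈ S, ∀ y ∈ S, K x y = K' x y := by
  obtain ⟨M, hM⟩ := hKb
  refine ⟨fun x y => (S ×ˢ S).indicator (Function.uncurry K) (x, y), max M 0,
    hK.indicator (hS.prod hS), fun x y => ?_, fun x hx y hy => by simp [hx, hy]⟩
  by_cases hxy : (x, y) ∈ S ×ˢ S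
  · simpa [hxy] using Or.inl (hM x hxy.1 y hxy.2)
  · simp [hxy]

lemma integral_integral_congr_of_ae_mem {K K' : ℝ → ℝ → ℝ} {S : Set ℝ} {μ ν : Measure ℝ}
    (hμ : ∀ᵐ x ∂μ, x ∈ S) (hν : ∀ᵐ y ∂ν, y ∈ S) (h : ∀ x ∈ S, ∀ y ∈ S, K x y = K' x y) :
    ∫ x, ∫ y, K x y ∂ν ∂μ = ∫ x, ∫ y, K' x y ∂ν ∂μ :=
  integral_congr_ae (hμ.mono fun x hx => integral_congr_ae (hν.mono fun y hy => h x hx y hy))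

lemma pairIntDiff_congr {K K' : ℝ → ℝ → ℝ} {S : Set ℝ} {μ ν μ' ν' : Measure ℝ}
    (hμ : ∀ᵐ x ∂μ, x ∈ S) (hν : ∀ᵐ x ∂ν, x ∈ S) (hμ' : ∀ᵐ x ∂μ', x ∈ S)
    (hν' : ∀ᵐ x ∂ν', x ∈ S) (h : ∀ x ∈ S, ∀ y ∈ S, K x y = K' x y) :
    pairIntDiff K μ ν μ' ν' = pairIntDiff K' μ ν μ' ν' := by
  rw [pairIntDiff, pairIntDiff, integral_integral_congr_of_ae_mem hμ hμ' h,
    integral_integral_congr_of_ae_mem hμ hν' h, integral_integral_congr_of_ae_mem hν hμ' h,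
    integral_integral_congr_of_ae_mem hν hν' h]

lemma Jker_congr {K K' : ℝ → ℝ → ℝ} (h : ∀ x ∈ Icc (0 : ℝ) 1, ∀ y ∈ Icc (0 : ℝ) 1, K x y = K' x y)
    {p q : ℝ × Bool} (hp : p.1 ∈ Icc (0 : ℝ) 1) (hq : q.1 ∈ Icc (0 : ℝ) 1) :
    Jker K p q = Jker K' p q :=
  pairIntDiff_congr (ae_restrict_mem measurableSet_Icc) (ae_alphaMeas_mem_Icc hp p.2)
    (ae_restrict_mem measurableSet_Icc) (ae_alphaMeas_mem_Icc hq q.2) h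

theorem integrable_and_integral_Jker_eq_zero {Ω : Type*} [MeasurableSpace Ω] {P : Measure Ω}
    [IsProbabilityMeasure P] {ρ : Measure (ℝ × Bool)}
    (hρ : alphaKernel ∘ₘ ρ = volume.restrict (Icc 0 1)) (hρ₀₁ : ∀ᵐ q ∂ρ, q.1 ∈ Icc (0 : ℝ) 1)
    {K : ℝ → ℝ → ℝ} (hK : Measurable (Function.uncurry K))
    (hKb : ∃ M, ∀ x ∈ Icc (0 : ℝ) 1, ∀ y ∈ Icc (0 : ℝ) 1, |K x y| ≤ M)
    {V V' : Ω → ℝ × Bool} (hV : Measurable V) (hV' : Measurable V') (hind : IndepFun V V' P)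
    (hVρ : P.map V = ρ) (hV'ρ : P.map V' = ρ) :
    Integrable (fun ω => Jker K (V ω) (V' ω)) P ∧ ∫ ω, Jker K (V ω) (V' ω) ∂P = 0 := by
  have : IsProbabilityMeasure ρ := hVρ ▸ Measure.isProbabilityMeasure_map hV.aemeasurable
  obtain ⟨K', M, hK'm, hK'b, hKK'⟩ := exists_bounded_measurable_eq_on measurableSet_Icc hK hKb
  have hα : ∀ q, alphaKernel q univ ≤ 1 := fun q => alphaMeas_univ_le_one q.1 q.2
  have hlaw : P.map (fun ω => (V ω, V' ω)) = ρ.prod ρ := by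
    rw [(indepFun_iff_map_prod_eq_prod_map_map hV.aemeasurable hV'.aemeasurable).1 hind, hVρ, hV'ρ]
  have hmem : ∀ W : Ω → ℝ × Bool, Measurable W → P.map W = ρ → ∀ᵐ ω ∂P, (W ω).1 ∈ Icc (0 : ℝ) 1 :=
    fun W hW hWρ => ae_of_ae_map hW.aemeasurable (hWρ ▸ hρ₀₁)
  have hae : (fun ω => Jker K (V ω) (V' ω)) =ᵐ[P] fun ω => Jker K' (V ω) (V' ω) := by
    filter_upwards [hmem V hV hVρ, hmem V' hV' hV'ρ] with ω h h' using Jker_congr hKK' h h'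
  have hJm : Measurable fun z : (ℝ × Bool) × (ℝ × Bool) => Jker K' z.1 z.2 :=
    measurable_pairIntDiff alphaKernel _ hK'm
  have hJint : Integrable (fun z : (ℝ × Bool) × (ℝ × Bool) => Jker K' z.1 z.2) (ρ.prod ρ) :=
    integrable_pairIntDiff alphaKernel hα _ (by simp) _ hK'm hK'b
  constructor
  · rw [← hlaw] at hJint
    exact ((integrable_map_measure hJm.aestronglyMeasurable (hV.prodMk hV').aemeasurable).1
      hJint).congr hae.symm
  · rw [integral_congr_ae hae, ← integral_map (hV.prodMk hV').aemeasurable hJm.aestronglyMeasurable,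
      hlaw]
    have h := integral_prod_pairIntDiff_comp alphaKernel hα hK'm hK'b ρ
    rw [hρ] at h
    exact h

theorem ustatistic_unbiased_under_null_general
    {Ω Ω' : Type*} [MeasurableSpace Ω] [MeasurableSpace Ω']
    (P : Measure Ω) [IsProbabilityMeasure P]
    (P' : Measure Ω') [IsProbabilityMeasure P']
    (X C : Ω → ℝ) (hX : Measurable X) (hC : Measurable C)
    (hXC : IndepFun X C P)
    (F₀ : ℝ → ℝ) (hF₀c : Continuous F₀)
    (hF₀ : ∀ t : ℝ, F₀ t = (P {ω | X ω ≤ t}).toReal)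
    (K : ℝ → ℝ → ℝ) (hK : Measurable (Function.uncurry K))
    (hKb : ∃ M : ℝ, ∀ x ∈ Set.Icc (0:ℝ) 1, ∀ y ∈ Set.Icc (0:ℝ) 1, |K x y| ≤ M)
    (n : ℕ) (W : Fin n → Ω' → ℝ × Bool)
    (hWm : ∀ i, Measurable (W i))
    (hWindep : iIndepFun W P')
    (hWdist : ∀ i, IdentDistrib (W i)
      (fun ω => (F₀ (min (X ω) (C ω)), decide (X ω ≤ C ω))) P' P) :
    (∀ i j : Fin n, i ≠ j → ∫ ω, Jker K (W i ω) (W j ω) ∂P' = 0)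
    ∧ ∫ ω, ((n.choose 2 : ℝ))⁻¹
        * ∑ p ∈ Finset.univ.filter (fun p : Fin n × Fin n => p.1 < p.2),
            Jker K (W p.1 ω) (W p.2 ω) ∂P' = 0 := by
  have : IsProbabilityMeasure (P.map X) := Measure.isProbabilityMeasure_map hX.aemeasurable
  have : IsProbabilityMeasure (P.map C) := Measure.isProbabilityMeasure_map hC.aemeasurable
  have hF₀cdf : F₀ = cdf (P.map X) := funext fun t => by
    rw [hF₀, cdf_eq_real, measureReal_def, Measure.map_apply hX measurableSet_Iic]
    rfl
  subst hF₀cdf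
  have hobs := (measurable_censoredObs hF₀c.measurable).comp (hX.prodMk hC)
  set ρ := P.map fun ω => (cdf (P.map X) (min (X ω) (C ω)), decide (X ω ≤ C ω))
  have hρ : alphaKernel ∘ₘ ρ = volume.restrict (Icc 0 1) := by
    rw [← alphaKernel_comp_map_censoredObs (P.map X) (P.map C) hF₀c,
      ← (indepFun_iff_map_prod_eq_prod_map_map hX.aemeasurable hC.aemeasurable).1 hXC,
      Measure.map_map (measurable_censoredObs hF₀c.measurable) (hX.prodMk hC)]
    rfl
  have hρ₀₁ : ∀ᵐ q ∂ρ, q.1 ∈ Icc (0 : ℝ) 1 :=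
    (ae_map_iff hobs.aemeasurable (measurable_fst measurableSet_Icc)).2
      (ae_of_all _ fun ω => ⟨cdf_nonneg _ _, cdf_le_one _ _⟩)
  have hJ : ∀ i j, i ≠ j →
      Integrable (fun ω => Jker K (W i ω) (W j ω)) P' ∧ ∫ ω, Jker K (W i ω) (W j ω) ∂P' = 0 :=
    fun i j hij => integrable_and_integral_Jker_eq_zero hρ hρ₀₁ hK hKb (hWm i) (hWm j)
      (hWindep.indepFun hij) (hWdist i).map_eq (hWdist j).map_eq
  refine ⟨fun i j hij => (hJ i j hij).2, ?_⟩
  rw [integral_const_mul, integral_finsetSum _ fun p hp => (hJ _ _ (Finset.mem_filter.1 hp).2.ne).1,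
    Finset.sum_eq_zero fun p hp => (hJ _ _ (Finset.mem_filter.1 hp).2.ne).2, mul_zero]

/-- For an i.i.d. sample `(U₁,Δ₁), …, (Uₙ,Δₙ)` distributed as
`(U,Δ)` under the null hypothesis, `E[J((Uᵢ,Δᵢ),(Uⱼ,Δⱼ))] = 0` for `i ≠ j`;
consequently the U-statistic `MMD_U = (n choose 2)⁻¹ Σ_{i<j} J((Uᵢ,Δᵢ),(Uⱼ,Δⱼ))`
has expectation `0 = MMD²_K(λ,λ)`, i.e. it is unbiased under the null. -/
theorem ustatistic_unbiased_under_null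
    {Ω Ω' : Type*} [MeasurableSpace Ω] [MeasurableSpace Ω']
    (P : Measure Ω) [IsProbabilityMeasure P]
    (P' : Measure Ω') [IsProbabilityMeasure P']
    (X C : Ω → ℝ) (hX : Measurable X) (hC : Measurable C)
    (hXC : IndepFun X C P)
    (F₀ : ℝ → ℝ) (hF₀c : Continuous F₀)
    (hF₀ : ∀ t : ℝ, F₀ t = (P {ω | X ω ≤ t}).toReal)
    (K : ℝ → ℝ → ℝ) (hK : Measurable (Function.uncurry K))
    (hKb : ∃ M : ℝ, ∀ x ∈ Set.Icc (0:ℝ) 1, ∀ y ∈ Set.Icc (0:ℝ) 1, |K x y| ≤ M)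
    (n : ℕ) (hn : 2 ≤ n) (W : Fin n → Ω' → ℝ × Bool)
    (hWm : ∀ i, Measurable (W i))
    (hWindep : iIndepFun W P')
    (hWdist : ∀ i, IdentDistrib (W i)
      (fun ω => (F₀ (min (X ω) (C ω)), decide (X ω ≤ C ω))) P' P) :
    (∀ i j : Fin n, i ≠ j → ∫ ω, Jker K (W i ω) (W j ω) ∂P' = 0)
    ∧ ∫ ω, ((n.choose 2 : ℝ))⁻¹
        * ∑ p ∈ Finset.univ.filter (fun p : Fin n × Fin n => p.1 < p.2),
            Jker K (W p.1 ω) (W p.2 ω) ∂P' = 0 :=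
  ustatistic_unbiased_under_null_general P P' X C hX hC hXC F₀ hF₀c hF₀ K hK hKb n W hWm hWindep
    hWdist
end
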